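/- For every d there exists a finite poset with boolean dimension at most 4 and local dimension greater than d; that is, there are posets with boolean dimension 4 and unbounded local dimension. -/

import Mathlib

/-- `L` is a realizer of the order `le`: a family of linear extensions of `le`
whose intersection is `le`. -/
def IsRealizer {X : Type*} (le : X → X → Prop) {d : ℕ} (L : Fin d → X → X → Prop) : Prop :=
  (∀ i, IsLinearOrder X (L i)) ∧ (∀ (i) (x y : X), le x y → L i x y) ∧
    (∀ x y : X, le x y ↔ ∀ i, L i x y)

/-- The (Dushnik–Miller) dimension of a poset: the least size of a realizer. -/
noncomputable def orderDim (X : Type*) [PartialOrder X] : ℕ :=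
  sInf {d : ℕ | ∃ L : Fin d → X → X → Prop, IsRealizer (· ≤ ·) L}

/-- `L` together with the boolean function `φ` is a boolean realizer of `le`. -/
def IsBooleanRealizer {X : Type*} (le : X → X → Prop) {d : ℕ}
    (L : Fin d → X → X → Prop) (φ : (Fin d → Prop) → Prop) : Prop :=
  (∀ i, IsLinearOrder X (L i)) ∧ ∀ x y : X, le x y ↔ φ (fun i => L i x y)

/-- Boolean dimension of a relation. -/
noncomputable def booleanDimRel {X : Type*} (le : X → X → Prop) : ℕ :=
  sInf {d : ℕ | ∃ (L : Fin d → X → X → Prop) (φ : (Fin d → Prop) → Prop),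
    IsBooleanRealizer le L φ}

/-- Boolean dimension of a poset. -/
noncomputable def booleanDim (X : Type*) [PartialOrder X] : ℕ :=
  booleanDimRel ((· ≤ ·) : X → X → Prop)

/-- A partial linear extension of `le`: a linear order on a subset of `X`
extending the restriction of `le` to that subset. -/
structure PLE {X : Type*} (le : X → X → Prop) where
  dom : Set X
  rel : X → X → Prop
  mem_left : ∀ x y, rel x y → x ∈ dom
  mem_right : ∀ x y, rel x y → y ∈ dom
  refl : ∀ x ∈ dom, rel x x
  antisymm : ∀ x y, rel x y → rel y x → x = y
  trans : ∀ x y z, rel x y → rel y z → rel x z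
  total : ∀ x ∈ dom, ∀ y ∈ dom, rel x y ∨ rel y x
  le_imp : ∀ x ∈ dom, ∀ y ∈ dom, le x y → rel x y

/-- A family of partial linear extensions is a local realizer of `le`:
`x ≤ y` iff no member reverses the pair strictly. -/
def IsLocalRealizer {X : Type*} {le : X → X → Prop} {ι : Type*} (L : ι → PLE le) : Prop :=
  ∀ x y : X, le x y ↔ ∀ i, ¬ ((L i).rel y x ∧ y ≠ x)

/-- Every element of `X` occurs in the domain of at most `d` members of the family. -/
def WidthAtMost {X : Type*} {le : X → X → Prop} {ι : Type*} (L : ι → PLE le) (d : ℕ) : Prop :=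
  ∀ x : X, ({i : ι | x ∈ (L i).dom}).ncard ≤ d

/-- Local dimension of a poset: the least width of a local realizer. -/
noncomputable def localDim (X : Type*) [PartialOrder X] : ℕ :=
  sInf {d : ℕ | ∃ (t : ℕ) (L : Fin t → PLE ((· ≤ ·) : X → X → Prop)),
    IsLocalRealizer L ∧ WidthAtMost L d}

/-!
The witnesses are the incidence posets of the complete graphs `K_n`: vertices, edges, and
`v ≤ e` iff `v` is an endpoint of `e`. Four lexicographic orders realize such a poset through the
boolean formula `(L₀ ∧ L₁) ∨ (L₂ ∧ L₃)`.

For the local dimension, take a local realizer of width `d`. For `u < v < w` the vertex `v` is not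
below the edge `uw`, so some member of the realizer places `uw` below `v`; colour the triple `uvw`
by the positions of that member among the at most `d` members whose domains contain `v`, resp.
`uw`. Ramsey's theorem for triples (stepped up twice from the pigeonhole principle) yields
`u < v < w < x` whose four triples share a colour. Equal positions force the same member to be
chosen for `uvw`, `uvx`, `uwx` and `vwx`, so one linear order puts `uw` below `v`, `v` below `vx`,
`vx` below `w` and `w` below `uw`, which is absurd.
-/

open Finset

section Ramsey

variable {α β γ κ : Type*}

def IsRamseyBound (R : β → Finset α → γ → Prop) (N : ℕ → ℕ) : Prop :=
  ∀ (m : ℕ) (h : β) (C : Finset α), N m ≤ #C → ∃ B ⊆ C, m ≤ #B ∧ ∃ v, R h B v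

theorem isRamseyBound_const [Fintype κ] [Nonempty κ] :
    IsRamseyBound (fun (h : α → κ) (B : Finset α) q => ∀ b ∈ B, h b = q)
      (Fintype.card κ * ·) := by
  classical
  intro m h C hC
  obtain ⟨q, -, hq⟩ :=
    exists_le_card_fiber_of_mul_le_card_of_maps_to (fun a _ => mem_univ (h a)) univ_nonempty hC
  exact ⟨{b ∈ C | h b = q}, filter_subset _ _, hq, q, fun b hb => (mem_filter.1 hb).2⟩

variable [LinearOrder α]

/-- A colouring of `(k+1)`-sets is encoded as a curried `χ : α → β`, with `β` the colourings of
`k`-sets and `R` a homogeneity notion for them; `g` records the reduced colouring. -/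
def EndHomogeneous (R : β → Finset α → γ → Prop) (χ : α → β) (A : Finset α) (g : α → γ) :
    Prop :=
  ∀ a ∈ A, R (χ a) {b ∈ A | a < b} (g a)

theorem EndHomogeneous.mono {R : β → Finset α → γ → Prop} (hR : ∀ h v, Antitone (R h · v))
    {χ : α → β} {A B : Finset α} {g : α → γ} (hAB : A ⊆ B) (hB : EndHomogeneous R χ B g) :
    EndHomogeneous R χ A g :=
  fun a ha => hR _ _ (filter_subset_filter _ hAB) (hB a (hAB ha))

def stepUpBound (N : ℕ → ℕ) : ℕ → ℕ
  | 0 => 0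
  | m + 1 => N (stepUpBound N m) + 1

theorem IsRamseyBound.stepUp [Nonempty γ] {R : β → Finset α → γ → Prop} {N : ℕ → ℕ}
    (hR : ∀ h v, Antitone (R h · v)) (hN : IsRamseyBound R N) :
    IsRamseyBound (EndHomogeneous R) (stepUpBound N) := by
  intro m
  induction m with
  | zero =>
    exact fun χ C _ =>
      ⟨∅, empty_subset _, le_rfl, Classical.arbitrary _, by simp [EndHomogeneous]⟩
  | succ m ih =>
    intro χ C hC
    simp only [stepUpBound] at hC
    have hne : C.Nonempty := card_pos.1 (by omega)
    set x := C.min' hne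
    obtain ⟨B, hBC, hB, v, hv⟩ := hN (stepUpBound N m) (χ x) (C.erase x)
      (by rw [card_erase_of_mem (C.min'_mem hne)]; omega)
    obtain ⟨A, hAB, hA, g, hg⟩ := ih χ B hB
    have hxA : x ∉ A := fun hx => by simpa using hBC (hAB hx)
    have hxa : ∀ a ∈ A, x < a := fun a ha =>
      lt_of_le_of_ne (C.min'_le a (mem_of_mem_erase (hBC (hAB ha)))) fun h => hxA (h ▸ ha)
    refine ⟨insert x A, insert_subset (C.min'_mem hne) ((hAB.trans hBC).trans (erase_subset _ _)),
      by rw [card_insert_of_notMem hxA]; omega, Function.update g x v, fun a ha => ?_⟩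
    rcases mem_insert.1 ha with rfl | ha
    · rw [Function.update_self]
      refine hR _ _ (fun b hb => ?_) hv
      obtain ⟨hb, hxb⟩ := mem_filter.1 hb
      rcases mem_insert.1 hb with rfl | hb
      · exact absurd hxb (lt_irrefl _)
      · exact hAB hb
    · rw [Function.update_of_ne (hxa a ha).ne', filter_insert, if_neg (hxa a ha).asymm]
      exact hg a ha

def tripleRamseyBound (k m : ℕ) : ℕ :=
  stepUpBound (stepUpBound (k * ·)) (stepUpBound (k * ·) (k * m))

theorem exists_monochromatic_triples [Fintype κ] [Nonempty κ] [Fintype α] {m : ℕ}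
    (hα : tripleRamseyBound (Fintype.card κ) m ≤ Fintype.card α) (χ : α → α → α → κ) :
    ∃ (f : Fin m ↪o α) (q : κ), ∀ i j k, i < j → j < k → χ (f i) (f j) (f k) = q := by
  have hanti : ∀ (h : α → κ) q, Antitone fun B : Finset α => ∀ b ∈ B, h b = q :=
    fun _ _ _ _ hAB hB b hb => hB b (hAB hb)
  have hR₁ := isRamseyBound_const (α := α) (κ := κ)
  have hR₂ := hR₁.stepUp hanti
  have hR₃ := hR₂.stepUp fun _ _ _ _ hAB hB => hB.mono hanti hAB
  obtain ⟨A, -, hA, g, hg⟩ := hR₃ _ χ univ hα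
  obtain ⟨B, hBA, hB, f, hf⟩ := hR₂ _ g A hA
  obtain ⟨H, hHB, hH, q, hq⟩ := hR₁ _ f B hB
  obtain ⟨H', hH'H, hH'⟩ := exists_subset_card_eq hH
  set e := H'.orderEmbOfFin hH'
  have hmem (i : Fin m) : e i ∈ H := hH'H (H'.orderEmbOfFin_mem hH' i)
  refine ⟨e, q, fun i j k hij hjk => ?_⟩
  calc χ (e i) (e j) (e k) = g (e i) (e j) :=
        hg _ (hBA (hHB (hmem i))) _ (mem_filter.2 ⟨hBA (hHB (hmem j)), e.strictMono hij⟩) _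
          (mem_filter.2 ⟨mem_filter.2 ⟨hBA (hHB (hmem k)), e.strictMono (hij.trans hjk)⟩,
            e.strictMono hjk⟩)
    _ = f (e i) := hf _ (hHB (hmem i)) _ (mem_filter.2 ⟨hHB (hmem j), e.strictMono hij⟩)
    _ = q := hq _ (hmem i)

end Ramsey

namespace PLE

variable {X : Type*} {le : X → X → Prop}

theorem eq_of_le_of_rel (P : PLE le) {x y : X} (hxy : le x y) (hyx : P.rel y x) : y = x :=
  P.antisymm _ _ hyx (P.le_imp _ (P.mem_right _ _ hyx) _ (P.mem_left _ _ hyx) hxy)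

theorem eq_of_rel_of_le_of_rel_of_le (P : PLE le) {a b c e : X} (hab : P.rel a b)
    (hbc : le b c) (hce : P.rel c e) (hea : le e a) : a = c :=
  P.antisymm _ _
    (P.trans _ _ _ hab (P.le_imp _ (P.mem_right _ _ hab) _ (P.mem_left _ _ hce) hbc))
    (P.trans _ _ _ hce (P.le_imp _ (P.mem_right _ _ hce) _ (P.mem_left _ _ hab) hea))

def ofNotLE (a b : X) (h : ¬ le a b) : PLE le where
  dom := {a, b}
  rel u v := u = v ∧ (u = a ∨ u = b) ∨ u = b ∧ v = a
  mem_left := by aesop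
  mem_right := by aesop
  refl := by aesop
  antisymm := by
    rintro u v (⟨rfl, -⟩ | ⟨rfl, rfl⟩) hvu
    · rfl
    · rcases hvu with ⟨h, -⟩ | ⟨h, -⟩ <;> exact h.symm
  trans := by aesop
  total := by aesop
  le_imp := by aesop

end PLE

section LocalDimension

variable {X : Type*}

theorem IsLocalRealizer.exists_rel {le : X → X → Prop} {ι : Type*} {L : ι → PLE le}
    (hL : IsLocalRealizer L) {x y : X} (h : ¬ le x y) : ∃ i, (L i).rel y x := by
  by_contra! hno
  exact h ((hL x y).2 fun i hi => hno i hi.1)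

theorem exists_isLocalRealizer (X : Type*) [Finite X] [Preorder X] :
    ∃ (t : ℕ) (L : Fin t → PLE ((· ≤ ·) : X → X → Prop)), IsLocalRealizer L := by
  let e := Finite.equivFin {p : X × X // ¬ p.1 ≤ p.2}
  refine ⟨_, fun i => PLE.ofNotLE _ _ (e.symm i).2, fun x y => ⟨?_, fun h => ?_⟩⟩
  · exact fun hxy i hyx => hyx.2 (PLE.eq_of_le_of_rel _ hxy hyx.1)
  · by_contra hxy
    refine h (e ⟨(x, y), hxy⟩) ⟨?_, fun hyx => hxy (hyx ▸ le_rfl)⟩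
    simp [PLE.ofNotLE]

variable {le : X → X → Prop} {t : ℕ}

theorem widthAtMost_fin (L : Fin t → PLE le) : WidthAtMost L t :=
  fun _ => (Set.ncard_le_card _).trans (Nat.card_eq_fintype_card.trans (Fintype.card_fin t)).le

theorem lt_localDim [Finite X] [PartialOrder X] {d : ℕ}
    (h : ∀ (t : ℕ) (L : Fin t → PLE ((· ≤ ·) : X → X → Prop)),
      IsLocalRealizer L → ¬ WidthAtMost L d) :
    d < localDim X := by
  obtain ⟨t, L, hL⟩ := exists_isLocalRealizer X
  by_contra! hle
  obtain ⟨t', L', hL', hw⟩ := Nat.sInf_mem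
    (s := {d : ℕ | ∃ (t : ℕ) (L : Fin t → PLE ((· ≤ ·) : X → X → Prop)),
      IsLocalRealizer L ∧ WidthAtMost L d}) ⟨t, t, L, hL, widthAtMost_fin L⟩
  exact h t' L' hL' fun x => (hw x).trans hle

noncomputable def domRank (L : Fin t → PLE le) (x : X) (i : Fin t) : ℕ :=
  {j | x ∈ (L j).dom ∧ j < i}.ncard

theorem domRank_le {d : ℕ} {L : Fin t → PLE le} (hw : WidthAtMost L d) (x : X) (i : Fin t) :
    domRank L x i ≤ d :=
  (Set.ncard_le_ncard (fun _ hj => hj.1) (Set.toFinite _)).trans (hw x)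

theorem domRank_injOn (L : Fin t → PLE le) (x : X) :
    Set.InjOn (domRank L x) {i | x ∈ (L i).dom} := by
  refine StrictMonoOn.injOn fun i hi j _ hij => Set.ncard_lt_ncard ?_ (Set.toFinite _)
  exact LE.le.ssubset_of_mem_notMem (fun k hk => ⟨hk.1, hk.2.trans hij⟩) ⟨hi, hij⟩
    fun h => lt_irrefl _ h.2

end LocalDimension

inductive Incidence (n : ℕ) where
  | vertex (v : Fin n)
  | edge (a b : Fin n) (hab : a < b)

namespace Incidence

variable {n : ℕ}

def le : Incidence n → Incidence n → Prop
  | vertex v, vertex w => v = w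
  | vertex v, edge a b _ => v = a ∨ v = b
  | edge _ _ _, vertex _ => False
  | edge a b _, edge a' b' _ => a = a' ∧ b = b'

instance : PartialOrder (Incidence n) where
  le := le
  le_refl x := by cases x <;> simp [le]
  le_trans x y z := by cases x <;> cases y <;> cases z <;> simp [le] <;> aesop
  le_antisymm x y := by cases x <;> cases y <;> simp_all [le]

def equivSum : Incidence n ≃ Fin n ⊕ {p : Fin n × Fin n // p.1 < p.2} where
  toFun
    | vertex v => .inl v
    | edge a b hab => .inr ⟨(a, b), hab⟩
  invFun
    | .inl v => vertex v
    | .inr p => edge p.1.1 p.1.2 p.2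
  left_inv x := by cases x <;> rfl
  right_inv x := by rcases x with _ | ⟨⟨_, _⟩, _⟩ <;> rfl

instance : Fintype (Incidence n) := Fintype.ofEquiv _ equivSum.symm

@[simp] lemma vertex_le_vertex {v w : Fin n} : vertex v ≤ vertex w ↔ v = w := Iff.rfl

@[simp] lemma vertex_le_edge {v a b : Fin n} {hab : a < b} :
    vertex v ≤ edge a b hab ↔ v = a ∨ v = b := Iff.rfl

@[simp] lemma not_edge_le_vertex {v a b : Fin n} {hab : a < b} : ¬ edge a b hab ≤ vertex v := id

@[simp] lemma edge_le_edge {a b a' b' : Fin n} {hab : a < b} {hab' : a' < b'} :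
    edge a b hab ≤ edge a' b' hab' ↔ a = a' ∧ b = b' := Iff.rfl

/-- `key 0` and `key 1` order the first endpoints in opposite directions, so they agree exactly
when `x = y` or `x` is the first endpoint of `y`; `key 2` and `key 3` do the same for the second
endpoint. -/
def key : Fin 4 → Incidence n → Fin n ×ₗ ℕ ×ₗ Fin n
  | 0, vertex v => toLex (v, toLex (0, v))
  | 0, edge a b _ => toLex (a, toLex (1, b))
  | 1, vertex v => toLex (v.rev, toLex (0, v.rev))
  | 1, edge a b _ => toLex (a.rev, toLex (1, b.rev))
  | 2, vertex v => toLex (v, toLex (0, v))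
  | 2, edge a b _ => toLex (b, toLex (1, a))
  | 3, vertex v => toLex (v.rev, toLex (0, v.rev))
  | 3, edge a b _ => toLex (b.rev, toLex (1, a.rev))

lemma key_injective (i : Fin 4) : Function.Injective (key (n := n) i) := by
  intro x y h
  fin_cases i <;> cases x <;> cases y <;> simp_all [key, Fin.rev_inj]

lemma isBooleanRealizer_key :
    IsBooleanRealizer ((· ≤ ·) : Incidence n → Incidence n → Prop)
      (fun i x y => key i x ≤ key i y) (fun p => (p 0 ∧ p 1) ∨ (p 2 ∧ p 3)) := by
  refine ⟨fun i => (key_injective i).isLinearOrder_onFun (· ≤ ·), fun x y => ?_⟩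
  cases x <;> cases y <;> simp [key, Prod.Lex.toLex_le_toLex] <;> omega

theorem booleanDim_le_four : booleanDim (Incidence n) ≤ 4 :=
  Nat.sInf_le ⟨_, _, isBooleanRealizer_key⟩

theorem not_rel_crossing (P : PLE ((· ≤ ·) : Incidence n → Incidence n → Prop))
    {u v w x : Fin n} (huv : u < v) (hvw : v < w) (hwx : w < x)
    (h : P.rel (edge u w (huv.trans hvw)) (vertex v)) :
    ¬ P.rel (edge v x (hvw.trans hwx)) (vertex w) := fun h' => by
  have := P.eq_of_rel_of_le_of_rel_of_le h (by simp) h' (by simp)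
  simp only [edge.injEq] at this
  exact huv.ne this.1

theorem not_widthAtMost {d t : ℕ} (hn : tripleRamseyBound ((d + 1) * (d + 1)) 4 ≤ n)
    (L : Fin t → PLE ((· ≤ ·) : Incidence n → Incidence n → Prop)) (hL : IsLocalRealizer L) :
    ¬ WidthAtMost L d := by
  intro hw
  have hrev : ∀ u v w (huv : u < v) (hvw : v < w),
      ∃ i, (L i).rel (edge u w (huv.trans hvw)) (vertex v) :=
    fun u v w huv hvw => hL.exists_rel (by simp [huv.ne', hvw.ne])
  choose pick hpick using hrev
  let rank (y : Incidence n) (i : Fin t) : Fin (d + 1) :=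
    ⟨domRank L y i, Nat.lt_succ_of_le (domRank_le hw y i)⟩
  let χ (u v w : Fin n) : Fin (d + 1) × Fin (d + 1) :=
    if h : u < v ∧ v < w then
      (rank (vertex v) (pick u v w h.1 h.2), rank (edge u w (h.1.trans h.2)) (pick u v w h.1 h.2))
    else (0, 0)
  obtain ⟨f, q, hf⟩ := exists_monochromatic_triples (by simpa using hn) χ
  have h01 : f 0 < f 1 := f.strictMono (by decide)
  have h12 : f 1 < f 2 := f.strictMono (by decide)
  have h23 : f 2 < f 3 := f.strictMono (by decide)
  have c₁ := (hf 0 1 2 (by decide) (by decide)).trans (hf 0 1 3 (by decide) (by decide)).symm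
  have c₂ := (hf 0 1 3 (by decide) (by decide)).trans (hf 0 2 3 (by decide) (by decide)).symm
  have c₃ := (hf 0 2 3 (by decide) (by decide)).trans (hf 1 2 3 (by decide) (by decide)).symm
  simp only [χ, rank, dif_pos (And.intro h01 h12), dif_pos (And.intro h01 (h12.trans h23)),
    dif_pos (And.intro (h01.trans h12) h23), dif_pos (And.intro h12 h23), Prod.mk.injEq,
    Fin.mk.injEq] at c₁ c₂ c₃
  have e₁ := domRank_injOn L _ ((L _).mem_right _ _ (hpick _ _ _ _ _))
    ((L _).mem_right _ _ (hpick _ _ _ _ _)) c₁.1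
  have e₂ := domRank_injOn L _ ((L _).mem_left _ _ (hpick _ _ _ _ _))
    ((L _).mem_left _ _ (hpick _ _ _ _ _)) c₂.2
  have e₃ := domRank_injOn L _ ((L _).mem_right _ _ (hpick _ _ _ _ _))
    ((L _).mem_right _ _ (hpick _ _ _ _ _)) c₃.1
  have h := hpick _ _ _ h12 h23
  rw [← e₃, ← e₂, ← e₁] at h
  exact not_rel_crossing (L _) h01 h12 h23 (hpick _ _ _ h01 h12) h

end Incidence

/-- For every `d` there exists a finite poset with boolean dimension
at most `4` and local dimension greater than `d`. -/
theorem boolean_dim_four_local_dim_unbounded (d : ℕ) :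
    ∃ (X : Type) (_ : Fintype X) (po : PartialOrder X),
      @booleanDim X po ≤ 4 ∧ d < @localDim X po :=
  ⟨Incidence (tripleRamseyBound ((d + 1) * (d + 1)) 4), inferInstance, inferInstance,
    Incidence.booleanDim_le_four,
    lt_localDim fun _ L hL => Incidence.not_widthAtMost le_rfl L hL⟩
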